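/- arXiv:1210.4279 — 2 statements merged into one kernel-verified Lean document; each statement's English description precedes it below -/
import Mathlib

section
/- Let (Ω, F, P) be a probability space and Z : Ω → (0,∞) an F-measurable function with Z > 0 P-almost surely and E_P[Z] = 1. Define the probability measure Q := P.withDensity Z, and let G ⊆ F be a sub-σ-algebra. Then E_P[Z | G] > 0 P-almost surely (equivalently Q-almost surely), and Q-almost surely E_Q[Z⁻¹ | G] = (E_P[Z | G])⁻¹. -/
/-!
On `G`-measurable sets `Z` and `E_P[Z | G]` have the same integral, so the integral of `Z > 0`
over `{E_P[Z | G] ≤ 0}` is nonpositive and this set is null. The same identity says that `Q`,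
restricted to `G`, has density `E_P[Z | G]` with respect to `P`; hence for `G`-measurable `s`
both `∫_s (E_P[Z | G])⁻¹ dQ` and `∫_s Z⁻¹ dQ` equal `P s`,
which characterises `E_Q[Z⁻¹ | G]`.
-/

open MeasureTheory ENNReal

namespace MeasureTheory

variable {α : Type*} {m m₀ : MeasurableSpace α} {μ : Measure[m₀] α} {f : α → ℝ}

theorem trim_withDensity_ofReal_eq_withDensity_condExp (hm : m ≤ m₀) [SigmaFinite (μ.trim hm)]
    (hf_int : Integrable f μ) (hf_nonneg : 0 ≤ᵐ[μ] f) :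
    (μ.withDensity fun x => ENNReal.ofReal (f x)).trim hm
      = (μ.trim hm).withDensity fun x => ENNReal.ofReal (μ[f | m] x) := by
  rw [← trim_withDensity hm stronglyMeasurable_condExp.measurable.ennreal_ofReal]
  refine @Measure.ext _ m _ _ fun s hs => ?_
  rw [trim_measurableSet_eq hm hs, trim_measurableSet_eq hm hs,
    withDensity_apply _ (hm s hs), withDensity_apply _ (hm s hs),
    ← ofReal_integral_eq_lintegral_ofReal hf_int.restrict (ae_restrict_of_ae hf_nonneg),
    ← ofReal_integral_eq_lintegral_ofReal integrable_condExp.restrict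
      (ae_restrict_of_ae (condExp_nonneg hf_nonneg)),
    setIntegral_condExp hm hf_int hs]

theorem ae_pos_condExp (hm : m ≤ m₀) [SigmaFinite (μ.trim hm)] (hf_int : Integrable f μ)
    (hf_pos : ∀ᵐ x ∂μ, 0 < f x) : ∀ᵐ x ∂μ, 0 < μ[f | m] x := by
  set N := {x | μ[f | m] x ≤ 0}
  have hN : MeasurableSet[m] N :=
    (stronglyMeasurable_condExp (m := m) (μ := μ) (f := f)).measurable measurableSet_Iic
  have hf_nonneg : 0 ≤ᵐ[μ.restrict N] f := ae_restrict_of_ae (hf_pos.mono fun _ hx => hx.le)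
  have h_int_zero : ∫ x in N, f x ∂μ = 0 := by
    refine le_antisymm ?_ (setIntegral_nonneg_of_ae_restrict hf_nonneg)
    rw [← setIntegral_condExp hm hf_int hN]
    exact setIntegral_nonpos (hm N hN) fun _ hx => hx
  have h_zero : f =ᵐ[μ.restrict N] 0 :=
    (setIntegral_eq_zero_iff_of_nonneg_ae hf_nonneg hf_int.integrableOn).mp h_int_zero
  have hμN : μ.restrict N = 0 := by
    rw [← ae_eq_bot, ← Filter.eventually_false_iff_eq_bot]
    filter_upwards [h_zero, ae_restrict_of_ae hf_pos] with x hx hx_pos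
    exact hx_pos.ne' hx
  rw [ae_iff]
  simpa [N, not_lt] using hμN

theorem integrable_inv_withDensity_ofReal [IsFiniteMeasure μ] (hf : Measurable f)
    (hf_pos : ∀ᵐ x ∂μ, 0 < f x) :
    Integrable (fun x => (f x)⁻¹) (μ.withDensity fun x => ENNReal.ofReal (f x)) := by
  rw [integrable_withDensity_iff hf.ennreal_ofReal (ae_of_all _ fun _ => ofReal_lt_top)]
  refine (integrable_const (1 : ℝ)).congr ?_
  filter_upwards [hf_pos] with x hx
  rw [toReal_ofReal hx.le, inv_mul_cancel₀ hx.ne']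

theorem setIntegral_inv_withDensity_ofReal (hf : Measurable f) (hf_pos : ∀ᵐ x ∂μ, 0 < f x)
    {s : Set α} (hs : MeasurableSet s) :
    ∫ x in s, (f x)⁻¹ ∂μ.withDensity (fun x => ENNReal.ofReal (f x)) = μ.real s := by
  rw [setIntegral_withDensity_eq_setIntegral_toReal_smul hf.ennreal_ofReal
    (ae_of_all _ fun _ => ofReal_lt_top) _ hs]
  have h_one :
      (fun x => (ENNReal.ofReal (f x)).toReal • (f x)⁻¹) =ᵐ[μ.restrict s] fun _ => 1 := by
    filter_upwards [ae_restrict_of_ae hf_pos] with x hx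
    rw [smul_eq_mul, toReal_ofReal hx.le, mul_inv_cancel₀ hx.ne']
  rw [integral_congr_ae h_one, setIntegral_const, smul_eq_mul, mul_one]

theorem condExp_inv_withDensity_ofReal (hm : m ≤ m₀) [IsFiniteMeasure μ] (hf : Measurable f)
    (hf_int : Integrable f μ) (hf_pos : ∀ᵐ x ∂μ, 0 < f x) :
    (μ.withDensity fun x => ENNReal.ofReal (f x))[fun x => (f x)⁻¹ | m]
      =ᵐ[μ.withDensity fun x => ENNReal.ofReal (f x)] fun x => (μ[f | m] x)⁻¹ := by
  have : IsFiniteMeasure (μ.withDensity fun x => ENNReal.ofReal (f x)) :=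
    isFiniteMeasure_withDensity_ofReal hf_int.2
  have hE_meas : Measurable[m] (μ[f | m]) := stronglyMeasurable_condExp.measurable
  have hE_pos : ∀ᵐ x ∂μ.trim hm, 0 < μ[f | m] x := by
    have h_nonpos : MeasurableSet[m] {x | ¬0 < μ[f | m] x} := (hE_meas measurableSet_Ioi).compl
    rw [ae_iff, trim_measurableSet_eq hm h_nonpos]
    exact ae_iff.mp (ae_pos_condExp hm hf_int hf_pos)
  have h_trim := trim_withDensity_ofReal_eq_withDensity_condExp hm hf_int
    (hf_pos.mono fun _ hx => hx.le)
  have h_int :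
      Integrable (fun x => (μ[f | m] x)⁻¹) (μ.withDensity fun x => ENNReal.ofReal (f x)) :=
    integrable_of_integrable_trim hm (by
      rw [h_trim]; exact integrable_inv_withDensity_ofReal hE_meas hE_pos)
  refine (ae_eq_condExp_of_forall_setIntegral_eq hm (integrable_inv_withDensity_ofReal hf hf_pos)
    (fun s _ _ => h_int.integrableOn) (fun s hs _ => ?_)
    hE_meas.inv.stronglyMeasurable.aestronglyMeasurable).symm
  rw [setIntegral_trim hm (f := fun x => (μ[f | m] x)⁻¹) hE_meas.inv.stronglyMeasurable hs,
    h_trim,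
    setIntegral_inv_withDensity_ofReal hE_meas hE_pos hs,
    setIntegral_inv_withDensity_ofReal hf hf_pos (hm s hs), measureReal_def, measureReal_def,
    trim_measurableSet_eq hm hs]

end MeasureTheory

theorem stmt_4_general {Ω : Type*} [mΩ : MeasurableSpace Ω] (P : Measure Ω) [IsProbabilityMeasure P]
    (Z : Ω → ℝ) (hZmeas : Measurable Z) (hZpos : ∀ᵐ ω ∂P, 0 < Z ω)
    (hZint : Integrable Z P)
    (G : MeasurableSpace Ω) (hG : G ≤ mΩ)
    (Q : @Measure Ω mΩ) (hQ : Q = P.withDensity (fun ω => ENNReal.ofReal (Z ω))) :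
    (∀ᵐ ω ∂P, 0 < (P[Z | G]) ω) ∧
    (∀ᵐ ω ∂Q, 0 < (P[Z | G]) ω) ∧
    (∀ᵐ ω ∂Q, (Q[(fun ω => (Z ω)⁻¹) | G]) ω = ((P[Z | G]) ω)⁻¹) := by
  subst hQ
  have hE_pos := ae_pos_condExp hG hZint hZpos
  exact ⟨hE_pos, (withDensity_absolutelyContinuous _ _).ae_le hE_pos,
    condExp_inv_withDensity_ofReal hG hZmeas hZint hZpos⟩

/-- The identity `E_Q[Z⁻¹ | G] = (E_P[Z | G])⁻¹` (with `Q = P.withDensity Z`) used for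
the total mass `ϱ_t(1) = Z_t⁻¹` of the unnormalized filter, together with the strict
positivity `E_P[Z | G] > 0` a.s. -/
theorem stmt_4 {Ω : Type*} [mΩ : MeasurableSpace Ω] (P : Measure Ω) [IsProbabilityMeasure P]
    (Z : Ω → ℝ) (hZmeas : Measurable Z) (hZpos : ∀ᵐ ω ∂P, 0 < Z ω)
    (hZint : Integrable Z P) (hZexp : ∫ ω, Z ω ∂P = 1)
    (G : MeasurableSpace Ω) (hG : G ≤ mΩ)
    (Q : @Measure Ω mΩ) (hQ : Q = P.withDensity (fun ω => ENNReal.ofReal (Z ω))) :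
    (∀ᵐ ω ∂P, 0 < (P[Z | G]) ω) ∧
    (∀ᵐ ω ∂Q, 0 < (P[Z | G]) ω) ∧
    (∀ᵐ ω ∂Q, (Q[(fun ω => (Z ω)⁻¹) | G]) ω = ((P[Z | G]) ω)⁻¹) :=
  stmt_4_general (mΩ := mΩ) P Z hZmeas hZpos hZint G hG Q hQ
end

section
/- Let (Ω, F, P) be a probability space, Z : Ω → (0,∞) F-measurable with Z > 0 P-almost surely and E_P[Z] = 1, and Q := P.withDensity Z. Let G ⊆ F be a sub-σ-algebra and X : Ω → ℝ be P-integrable. Then X Z⁻¹ is Q-integrable, E_Q[Z⁻¹ | G] > 0 Q-almost surely, and P-almost surely E_P[X | G] = E_Q[X Z⁻¹ | G] / E_Q[Z⁻¹ | G]. -/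
open MeasureTheory

/-! Under `Q = Z • P` a `P`-integrable `X` corresponds to the `Q`-integrable `X Z⁻¹`, with the
same integrals over every measurable set. Hence for `G`-measurable `s`, pulling the
`G`-measurable factor `E_P[X | G]` out of a `Q`-conditional expectation gives
`∫_s E_P[X | G] E_Q[Z⁻¹ | G] dQ = ∫_s E_P[X | G] dP = ∫_s X dP = ∫_s X Z⁻¹ dQ`,
i.e. `E_P[X | G] E_Q[Z⁻¹ | G] = E_Q[X Z⁻¹ | G]` `Q`-a.s., hence `P`-a.s. since `P ≪ Q`.
Dividing is legitimate because the conditional expectation of the strictly positive `Z⁻¹` is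
strictly positive. -/

section CondExpPos

variable {Ω : Type*} {m m₀ : MeasurableSpace Ω} {μ : Measure[m₀] Ω} {f : Ω → ℝ}

/-- On `{μ[f|m] ≤ 0}` the integral of `f` is nonpositive, which forces that set to be null. -/
theorem condExp_pos (hm : m ≤ m₀) [SigmaFinite (μ.trim hm)] (hf : Integrable f μ)
    (hpos : ∀ᵐ ω ∂μ, 0 < f ω) : ∀ᵐ ω ∂μ, 0 < μ[f|m] ω := by
  set s := {ω | μ[f|m] ω ≤ 0}
  have hs : MeasurableSet[m] s :=
    stronglyMeasurable_condExp.measurableSet_le stronglyMeasurable_const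
  have hf_nonneg : 0 ≤ᵐ[μ.restrict s] f := ae_restrict_of_ae (hpos.mono fun _ h => h.le)
  have hint_zero : ∫ ω in s, f ω ∂μ = 0 :=
    le_antisymm (setIntegral_condExp hm hf hs ▸ setIntegral_nonpos (hm s hs) fun _ h => h)
      (integral_nonneg_of_ae hf_nonneg)
  have hf_zero : f =ᵐ[μ.restrict s] 0 :=
    (integral_eq_zero_iff_of_nonneg_ae hf_nonneg hf.integrableOn).1 hint_zero
  have hs_null : μ.restrict s = 0 := by
    rw [← ae_eq_bot, ← Filter.eventually_false_iff_eq_bot]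
    filter_upwards [hf_zero, ae_restrict_of_ae hpos] with ω h0 hω
    exact hω.ne' h0
  rw [ae_iff]
  simpa only [not_lt] using Measure.restrict_eq_zero.1 hs_null

end CondExpPos

section WithDensity

-- `G` comes before `mΩ` so that instance resolution picks `mΩ` as the ambient σ-algebra.
variable {Ω : Type*} {G : MeasurableSpace Ω} [mΩ : MeasurableSpace Ω]
  {P : Measure Ω} {Z : Ω → ℝ}

theorem toReal_ofReal_smul_mul_inv_ae_eq (hZ : ∀ᵐ ω ∂P, 0 < Z ω) (g : Ω → ℝ) :
    (fun ω => (ENNReal.ofReal (Z ω)).toReal • (g ω * (Z ω)⁻¹)) =ᵐ[P] g := by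
  filter_upwards [hZ] with ω hω
  rw [ENNReal.toReal_ofReal hω.le, smul_eq_mul, mul_left_comm, mul_inv_cancel₀ hω.ne', mul_one]

theorem integrable_mul_inv_withDensity_ofReal (hZm : AEMeasurable Z P)
    (hZ : ∀ᵐ ω ∂P, 0 < Z ω) {g : Ω → ℝ} (hg : Integrable g P) :
    Integrable (fun ω => g ω * (Z ω)⁻¹) (P.withDensity fun ω => ENNReal.ofReal (Z ω)) := by
  rw [integrable_withDensity_iff_integrable_smul₀' hZm.ennreal_ofReal
    (ae_of_all _ fun _ => ENNReal.ofReal_lt_top)]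
  exact hg.congr (toReal_ofReal_smul_mul_inv_ae_eq hZ g).symm

theorem integrable_inv_withDensity_ofReal [IsFiniteMeasure P] (hZm : AEMeasurable Z P)
    (hZ : ∀ᵐ ω ∂P, 0 < Z ω) :
    Integrable (fun ω => (Z ω)⁻¹) (P.withDensity fun ω => ENNReal.ofReal (Z ω)) := by
  simpa using integrable_mul_inv_withDensity_ofReal hZm hZ (integrable_const (1 : ℝ))

theorem setIntegral_mul_inv_withDensity_ofReal (hZm : AEMeasurable Z P)
    (hZ : ∀ᵐ ω ∂P, 0 < Z ω) (g : Ω → ℝ) {s : Set Ω} (hs : MeasurableSet s) :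
    ∫ ω in s, g ω * (Z ω)⁻¹ ∂(P.withDensity fun ω => ENNReal.ofReal (Z ω)) =
      ∫ ω in s, g ω ∂P := by
  rw [setIntegral_withDensity_eq_setIntegral_toReal_smul₀ hZm.ennreal_ofReal.restrict
    (ae_of_all _ fun _ => ENNReal.ofReal_lt_top) _ hs]
  exact setIntegral_congr_ae hs ((toReal_ofReal_smul_mul_inv_ae_eq hZ g).mono fun _ h _ => h)

theorem condExp_mul_condExp_inv_withDensity_ofReal [IsFiniteMeasure P]
    (hZm : AEMeasurable Z P) (hZ : ∀ᵐ ω ∂P, 0 < Z ω) (hG : G ≤ mΩ)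
    [SigmaFinite ((P.withDensity fun ω => ENNReal.ofReal (Z ω)).trim hG)]
    {X : Ω → ℝ} (hX : Integrable X P) :
    (fun ω =>
        P[X|G] ω * (P.withDensity fun ω => ENNReal.ofReal (Z ω))[fun ω => (Z ω)⁻¹|G] ω)
      =ᵐ[P.withDensity fun ω => ENNReal.ofReal (Z ω)]
      (P.withDensity fun ω => ENNReal.ofReal (Z ω))[fun ω => X ω * (Z ω)⁻¹|G] := by
  set Q := P.withDensity fun ω => ENNReal.ofReal (Z ω)
  have hE : StronglyMeasurable[G] (P[X|G]) := stronglyMeasurable_condExp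
  have hEQ : Integrable (fun ω => P[X|G] ω * (Z ω)⁻¹) Q :=
    integrable_mul_inv_withDensity_ofReal hZm hZ integrable_condExp
  have hpull :
      Q[fun ω => P[X|G] ω * (Z ω)⁻¹|G] =ᵐ[Q] fun ω => P[X|G] ω * Q[fun ω => (Z ω)⁻¹|G] ω :=
    condExp_mul_of_stronglyMeasurable_left hE hEQ (integrable_inv_withDensity_ofReal hZm hZ)
  refine ae_eq_condExp_of_forall_setIntegral_eq hG
    (integrable_mul_inv_withDensity_ofReal hZm hZ hX)
    (fun _ _ _ => (integrable_condExp.congr hpull).integrableOn) (fun s hs _ => ?_)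
    (hE.mul stronglyMeasurable_condExp).aestronglyMeasurable
  calc ∫ ω in s, P[X|G] ω * Q[fun ω => (Z ω)⁻¹|G] ω ∂Q
      = ∫ ω in s, Q[fun ω => P[X|G] ω * (Z ω)⁻¹|G] ω ∂Q :=
        (setIntegral_congr_ae (hG s hs) (hpull.mono fun _ h _ => h)).symm
    _ = ∫ ω in s, P[X|G] ω * (Z ω)⁻¹ ∂Q := setIntegral_condExp hG hEQ hs
    _ = ∫ ω in s, P[X|G] ω ∂P := setIntegral_mul_inv_withDensity_ofReal hZm hZ _ (hG s hs)
    _ = ∫ ω in s, X ω ∂P := setIntegral_condExp hG hX hs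
    _ = ∫ ω in s, X ω * (Z ω)⁻¹ ∂Q :=
        (setIntegral_mul_inv_withDensity_ofReal hZm hZ X (hG s hs)).symm

end WithDensity

theorem stmt_5_general {Ω : Type*} [mΩ : MeasurableSpace Ω] (P : Measure Ω) [IsProbabilityMeasure P]
    (Z : Ω → ℝ) (hZmeas : Measurable Z) (hZpos : ∀ᵐ ω ∂P, 0 < Z ω)
    (hZint : Integrable Z P)
    (G : MeasurableSpace Ω) (hG : G ≤ mΩ)
    (Q : @Measure Ω mΩ) (hQ : Q = P.withDensity (fun ω => ENNReal.ofReal (Z ω)))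
    (X : Ω → ℝ) (hXint : Integrable X P) :
    Integrable (fun ω => X ω * (Z ω)⁻¹) Q ∧
    (∀ᵐ ω ∂Q, 0 < (Q[(fun ω => (Z ω)⁻¹) | G]) ω) ∧
    (∀ᵐ ω ∂P, (P[X | G]) ω =
      (Q[(fun ω => X ω * (Z ω)⁻¹) | G]) ω / (Q[(fun ω => (Z ω)⁻¹) | G]) ω) := by
  subst hQ
  -- otherwise the explicit `G` would be taken as the ambient σ-algebra
  let := mΩ
  have := isFiniteMeasure_withDensity_ofReal hZint.2
  have hPQ : P ≪ P.withDensity fun ω => ENNReal.ofReal (Z ω) :=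
    withDensity_absolutelyContinuous' hZmeas.ennreal_ofReal.aemeasurable
      (hZpos.mono fun _ h => (ENNReal.ofReal_pos.2 h).ne')
  have hZinv_pos : ∀ᵐ ω ∂(P.withDensity fun ω => ENNReal.ofReal (Z ω)), 0 < (Z ω)⁻¹ :=
    (withDensity_absolutelyContinuous _ _).ae_le (hZpos.mono fun _ h => inv_pos.2 h)
  have hY_pos := condExp_pos hG
    (integrable_inv_withDensity_ofReal hZmeas.aemeasurable hZpos) hZinv_pos
  refine ⟨integrable_mul_inv_withDensity_ofReal hZmeas.aemeasurable hZpos hXint, hY_pos, ?_⟩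
  filter_upwards [hPQ.ae_le (condExp_mul_condExp_inv_withDensity_ofReal hZmeas.aemeasurable
    hZpos hG hXint), hPQ.ae_le hY_pos] with ω hmul hpos
  rw [eq_div_iff hpos.ne']
  exact hmul

/-- The Kallianpur–Striebel formula (kall_stri), abstractly: with `Q = P.withDensity Z`,
for `P`-integrable `X` one has `X Z⁻¹ ∈ L¹(Q)`, `E_Q[Z⁻¹ | G] > 0` `Q`-a.s., and
`E_P[X | G] = E_Q[X Z⁻¹ | G] / E_Q[Z⁻¹ | G]` `P`-a.s. -/
theorem stmt_5 {Ω : Type*} [mΩ : MeasurableSpace Ω] (P : Measure Ω) [IsProbabilityMeasure P]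
    (Z : Ω → ℝ) (hZmeas : Measurable Z) (hZpos : ∀ᵐ ω ∂P, 0 < Z ω)
    (hZint : Integrable Z P) (hZexp : ∫ ω, Z ω ∂P = 1)
    (G : MeasurableSpace Ω) (hG : G ≤ mΩ)
    (Q : @Measure Ω mΩ) (hQ : Q = P.withDensity (fun ω => ENNReal.ofReal (Z ω)))
    (X : Ω → ℝ) (hXint : Integrable X P) :
    Integrable (fun ω => X ω * (Z ω)⁻¹) Q ∧
    (∀ᵐ ω ∂Q, 0 < (Q[(fun ω => (Z ω)⁻¹) | G]) ω) ∧
    (∀ᵐ ω ∂P, (P[X | G]) ω =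
      (Q[(fun ω => X ω * (Z ω)⁻¹) | G]) ω / (Q[(fun ω => (Z ω)⁻¹) | G]) ω) :=
  stmt_5_general (mΩ := mΩ) P Z hZmeas hZpos hZint G hG Q hQ X hXint
end
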